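/- Let 0 < l₀ < L₀, set A = π(L₀² − l₀²), b₀ = √(A/π + l₀²) − l₀ and t₀ = 2√(A/π) − 2b₀, and define l(t) = (A/π − (b₀ + t/2)²)/(2b₀ + t) and L(t) = (A/π + (b₀ + t/2)²)/(2b₀ + t) for t ∈ [0, t₀). Then l(0) = l₀, L(0) = L₀, 0 < l(t) < L(t) and π(L(t)² − l(t)²) = A for all t ∈ [0, t₀), the functions solve the system of ordinary differential equations l'(t) = −L(t)/(2(L(t) − l(t))) and L'(t) = −l(t)/(2(L(t) − l(t))) on [0, t₀), and l(t) → 0 as t → t₀⁻. -/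

import Mathlib

/-! With `c = A/π` and `s = b₀ + t/2`, the radii are `l = (c - s²)/(2s)` and `L = (c + s²)/(2s)`,
so `L - l = s` and `L + l = c/s`; hence `L² - l² = c` and `l' = -(c + s²)/(4s²) = -L/(2(L - l))`,
`L' = (s² - c)/(4s²) = -l/(2(L - l))`. On `[0, t₀)` one has `0 < s < √c`, which makes `l` positive,
and `l` vanishes at `t₀`, where `s = √c`. Finally `b₀ = L₀ - l₀` and `c = L₀² - l₀²` give the
initial values. -/

open Set Filter

noncomputable section

namespace Annulus

variable (c b : ℝ) {t : ℝ}

def innerRadius (t : ℝ) : ℝ := (c - (b + t / 2) ^ 2) / (2 * b + t)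

def outerRadius (t : ℝ) : ℝ := (c + (b + t / 2) ^ 2) / (2 * b + t)

theorem innerRadius_zero_of_sq_sub_sq {l₀ L₀ : ℝ} (h : l₀ ≠ L₀) :
    innerRadius (L₀ ^ 2 - l₀ ^ 2) (L₀ - l₀) 0 = l₀ := by
  have : 2 * (L₀ - l₀) ≠ 0 := by intro h'; apply h; linarith
  rw [innerRadius, div_eq_iff (by simpa using this)]
  ring

theorem outerRadius_zero_of_sq_sub_sq {l₀ L₀ : ℝ} (h : l₀ ≠ L₀) :
    outerRadius (L₀ ^ 2 - l₀ ^ 2) (L₀ - l₀) 0 = L₀ := by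
  have : 2 * (L₀ - l₀) ≠ 0 := by intro h'; apply h; linarith
  rw [outerRadius, div_eq_iff (by simpa using this)]
  ring

theorem outerRadius_sub_innerRadius (ht : 2 * b + t ≠ 0) :
    outerRadius c b t - innerRadius c b t = b + t / 2 := by
  rw [outerRadius, innerRadius, div_sub_div_same, div_eq_iff ht]
  ring

theorem outerRadius_sq_sub_innerRadius_sq (ht : 2 * b + t ≠ 0) :
    outerRadius c b t ^ 2 - innerRadius c b t ^ 2 = c := by
  rw [outerRadius, innerRadius, div_pow, div_pow, ← sub_div, div_eq_iff (pow_ne_zero 2 ht)]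
  ring

theorem innerRadius_lt_outerRadius (ht : 0 < b + t / 2) :
    innerRadius c b t < outerRadius c b t := by
  have := outerRadius_sub_innerRadius c b (t := t) (by linarith)
  linarith

theorem innerRadius_pos_of_mem_Ico (hb : 0 < b) (ht : t ∈ Ico 0 (2 * √c - 2 * b)) :
    0 < innerRadius c b t := by
  have hs : 0 < b + t / 2 := by linarith [ht.1]
  have hsc : (b + t / 2) ^ 2 < c := (Real.lt_sqrt hs.le).mp (by linarith [ht.2])
  exact div_pos (by linarith) (by linarith)

theorem hasDerivAt_add_half_sq (t : ℝ) : HasDerivAt (fun t => (b + t / 2) ^ 2) (b + t / 2) t := by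
  have := (((hasDerivAt_id t).div_const 2).const_add b).fun_pow 2
  exact this.congr_deriv (by simp only [id]; ring)

theorem hasDerivAt_innerRadius (ht : 2 * b + t ≠ 0) :
    HasDerivAt (innerRadius c b)
      (-outerRadius c b t / (2 * (outerRadius c b t - innerRadius c b t))) t := by
  have h := ((hasDerivAt_add_half_sq b t).const_sub c).div ((hasDerivAt_id t).const_add (2 * b)) ht
  rw [outerRadius_sub_innerRadius c b ht]
  refine h.congr_deriv ?_
  have : b + t / 2 ≠ 0 := by contrapose! ht; linarith
  simp only [id, outerRadius]
  field_simp
  ring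

theorem hasDerivAt_outerRadius (ht : 2 * b + t ≠ 0) :
    HasDerivAt (outerRadius c b)
      (-innerRadius c b t / (2 * (outerRadius c b t - innerRadius c b t))) t := by
  have h := ((hasDerivAt_add_half_sq b t).const_add c).div ((hasDerivAt_id t).const_add (2 * b)) ht
  rw [outerRadius_sub_innerRadius c b ht]
  refine h.congr_deriv ?_
  have : b + t / 2 ≠ 0 := by contrapose! ht; linarith
  simp only [id, innerRadius]
  field_simp
  ring

theorem tendsto_innerRadius_zero {c : ℝ} (hc : 0 < c) :
    Tendsto (innerRadius c b) (nhds (2 * √c - 2 * b)) (nhds 0) := by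
  have hden : 2 * b + (2 * √c - 2 * b) ≠ 0 := by
    have := Real.sqrt_pos.mpr hc; linarith
  have hcont : ContinuousAt (innerRadius c b) (2 * √c - 2 * b) :=
    ContinuousAt.div (by fun_prop) (by fun_prop) hden
  convert hcont.tendsto
  rw [innerRadius, show b + (2 * √c - 2 * b) / 2 = √c by ring, Real.sq_sqrt hc.le, sub_self,
    zero_div]

end Annulus

open Annulus in
/-- Example 3.6, evolution of an annulus: the explicit radii
`l(t) = (A/π - (b₀+t/2)²)/(2b₀+t)` and `L(t) = (A/π + (b₀+t/2)²)/(2b₀+t)` satisfy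
`l(0) = l₀`, `L(0) = L₀`, stay ordered and area-preserving on `[0, t₀)`, solve the ODE
system `l' = -L/(2(L-l))`, `L' = -l/(2(L-l))`, and `l(t) → 0` as `t → t₀⁻`. -/
theorem annulus_evolution (l₀ L₀ A b₀ t₀ : ℝ) (l L : ℝ → ℝ)
    (hl₀ : 0 < l₀) (hL₀ : l₀ < L₀)
    (hA : A = Real.pi * (L₀^2 - l₀^2))
    (hb : b₀ = Real.sqrt (A / Real.pi + l₀^2) - l₀)
    (ht : t₀ = 2 * Real.sqrt (A / Real.pi) - 2 * b₀)
    (hldef : ∀ t : ℝ, l t = (A / Real.pi - (b₀ + t/2)^2) / (2*b₀ + t))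
    (hLdef : ∀ t : ℝ, L t = (A / Real.pi + (b₀ + t/2)^2) / (2*b₀ + t)) :
    l 0 = l₀ ∧ L 0 = L₀ ∧
    (∀ t ∈ Ico (0:ℝ) t₀,
      0 < l t ∧ l t < L t ∧ Real.pi * ((L t)^2 - (l t)^2) = A) ∧
    (∀ t ∈ Ico (0:ℝ) t₀,
      HasDerivAt l (-(L t) / (2 * (L t - l t))) t ∧
      HasDerivAt L (-(l t) / (2 * (L t - l t))) t) ∧
    Filter.Tendsto l (nhdsWithin t₀ (Iio t₀)) (nhds 0) := by
  have hc : A / Real.pi = L₀ ^ 2 - l₀ ^ 2 := by rw [hA]; field_simp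
  have hb₀ : b₀ = L₀ - l₀ := by
    rw [hb, hc, sub_add_cancel, Real.sqrt_sq (by linarith)]
  obtain rfl : l = innerRadius (A / Real.pi) b₀ := funext hldef
  obtain rfl : L = outerRadius (A / Real.pi) b₀ := funext hLdef
  subst ht
  have hden {t : ℝ} (ht : t ∈ Ico 0 (2 * √(A / Real.pi) - 2 * b₀)) : 2 * b₀ + t ≠ 0 := by
    linarith [ht.1]
  refine ⟨by rw [hc, hb₀, innerRadius_zero_of_sq_sub_sq hL₀.ne],
    by rw [hc, hb₀, outerRadius_zero_of_sq_sub_sq hL₀.ne], fun t ht => ⟨?_, ?_, ?_⟩,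
    fun t ht => ⟨hasDerivAt_innerRadius _ _ (hden ht), hasDerivAt_outerRadius _ _ (hden ht)⟩,
    (tendsto_innerRadius_zero _ ?_).mono_left nhdsWithin_le_nhds⟩
  · exact innerRadius_pos_of_mem_Ico _ _ (by linarith) ht
  · exact innerRadius_lt_outerRadius _ _ (by linarith [ht.1])
  · rw [outerRadius_sq_sub_innerRadius_sq _ _ (hden ht), mul_div_cancel₀ _ Real.pi_ne_zero]
  · rw [hc]; nlinarith
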